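/- Let (x₀,ω₀) ∈ G × S be such that y₀ := x₀ − t(x₀,ω₀)ω₀ is a regular (C¹) point of ∂G and ω₀·ν(y₀) < 0. Then the escape time t is continuously differentiable on a neighbourhood of (x₀,ω₀) in G × S, one has lim_{(x,ω)→(y₀,ω₀), (x,ω)∈G×S} t(x,ω) = 0, and ω₀·(∇_x t)(x₀,ω₀) = 1. -/

import Mathlib

/-!
Near a transversal exit point the escape time is the solution `τ(x,ω)` of `f(x - τω) = 0`
given by the implicit function theorem. It is the *first* exit time because
`s ↦ f(x - sω)` is strictly increasing near `τ` (transversality persists nearby), while the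
earlier part of the ray stays in `G` by compactness of that segment. Applying the same argument
at `y₀` itself, with exit time `0`, gives the limit. Finally `t(x + sω, ω) = t(x, ω) + s` for
small `s`, which forces `ω₀·∇ₓt = 1`.
-/

open MeasureTheory Metric Set Filter
open scoped ENNReal RealInnerProductSpace Topology

noncomputable section

/-- Euclidean three-space ℝ³. -/
abbrev E3 : Type := EuclideanSpace ℝ (Fin 3)

/-- The unit sphere `S ⊂ ℝ³`. -/
def sphS : Set E3 := Metric.sphere (0 : E3) 1

/-- The escape time `t(x,ω) = inf {s > 0 : x − sω ∉ G}`. -/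
def escTime (G : Set E3) (x ω : E3) : ℝ := sInf {s : ℝ | 0 < s ∧ x - s • ω ∉ G}

section Rays

variable {E : Type*} [NormedAddCommGroup E] [NormedSpace ℝ E] {f : E → ℝ} {x ω : E}

theorem hasDerivAt_comp_sub_smul {s : ℝ} (hf : DifferentiableAt ℝ f (x - s • ω)) :
    HasDerivAt (fun s => f (x - s • ω)) (-fderiv ℝ f (x - s • ω) ω) s := by
  have hline : HasDerivAt (fun s : ℝ => x - s • ω) (-ω) s := by
    simpa using ((hasDerivAt_id s).smul_const ω).const_sub x
  exact (hf.hasFDerivAt.comp_hasDerivAt s hline).congr_deriv (map_neg _ _)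

theorem strictMonoOn_comp_sub_smul {I : Set ℝ} (hI : Convex ℝ I)
    (hf : ∀ s ∈ I, DifferentiableAt ℝ f (x - s • ω))
    (hneg : ∀ s ∈ I, fderiv ℝ f (x - s • ω) ω < 0) :
    StrictMonoOn (fun s => f (x - s • ω)) I :=
  strictMonoOn_of_hasDerivWithinAt_pos hI
    (fun s hs => (hasDerivAt_comp_sub_smul (hf s hs)).continuousAt.continuousWithinAt)
    (fun s hs => (hasDerivAt_comp_sub_smul (hf s (interior_subset hs))).hasDerivWithinAt)
    (fun s hs => neg_pos.2 (hneg s (interior_subset hs)))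

theorem ContinuousLinearMap.isInvertible_of_apply_one_ne_zero {L : ℝ →L[ℝ] ℝ} (h : L 1 ≠ 0) :
    L.IsInvertible :=
  ⟨ContinuousLinearEquiv.unitsEquivAut ℝ (Units.mk0 _ h), by ext; simp⟩

theorem exists_contDiffAt_sub_smul_eq [CompleteSpace E] {n : WithTop ℕ∞} (hn : n ≠ 0) {t : ℝ}
    (hf : ContDiffAt ℝ n f (x - t • ω)) (htr : fderiv ℝ f (x - t • ω) ω ≠ 0) :
    ∃ τ : E × E → ℝ, ContDiffAt ℝ n τ (x, ω) ∧ τ (x, ω) = t ∧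
      ∀ᶠ p in 𝓝 (x, ω), f (p.1 - τ p • p.2) = f (x - t • ω) := by
  set g : (E × E) × ℝ → ℝ := fun q => f (q.1.1 - q.2 • q.1.2)
  have hg : ContDiffAt ℝ n g ((x, ω), t) := hf.comp ((x, ω), t) (by fun_prop)
  have hinv : (fderiv ℝ g ((x, ω), t) ∘L .inr ℝ (E × E) ℝ).IsInvertible := by
    refine ContinuousLinearMap.isInvertible_of_apply_one_ne_zero ?_
    have hslice := (hg.differentiableAt hn).hasFDerivAt.comp t (hasFDerivAt_prodMk_right (x, ω) t)
    rw [hslice.hasDerivAt.unique (hasDerivAt_comp_sub_smul (hf.differentiableAt hn))]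
    exact neg_ne_zero.2 htr
  exact ⟨hg.implicitFunction hn hinv, hg.contDiffAt_implicitFunction hn hinv,
    hg.implicitFunction_apply_self hn hinv, hg.eventually_apply_implicitFunction hn hinv⟩

theorem exists_forall_Icc_fderiv_sub_smul_neg {U : Set E} {t : ℝ} (hU : IsOpen U)
    (hy : x - t • ω ∈ U) (hf : ContinuousAt (fderiv ℝ f) (x - t • ω))
    (htr : fderiv ℝ f (x - t • ω) ω < 0) :
    ∃ δ > 0, ∀ᶠ p in 𝓝 (x, ω), ∀ s ∈ Icc (t - δ) (t + δ),
      p.1 - s • p.2 ∈ U ∧ fderiv ℝ f (p.1 - s • p.2) p.2 < 0 := by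
  set m : (E × E) × ℝ → E := fun q => q.1.1 - q.2 • q.1.2
  have hm : Continuous m := by fun_prop
  have hmU : ∀ᶠ q in 𝓝 ((x, ω), t), m q ∈ U := hm.continuousAt.preimage_mem_nhds (hU.mem_nhds hy)
  have hneg : ∀ᶠ q in 𝓝 ((x, ω), t), fderiv ℝ f (m q) q.1.2 < 0 :=
    ((hf.comp_of_eq hm.continuousAt rfl).clm_apply (by fun_prop)).eventually_lt
      continuousAt_const htr
  rw [nhds_prod_eq] at hmU hneg
  obtain ⟨pa, hpa, pb, hpb, hp⟩ := eventually_prod_iff.1 (hmU.and hneg)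
  obtain ⟨δ, hδ, hball⟩ := nhds_basis_closedBall.eventually_iff.1 hpb
  exact ⟨δ, hδ, hpa.mono fun p hp' s hs => hp hp' (hball (by rwa [Real.closedBall_eq_Icc]))⟩

theorem eventually_forall_sub_smul_mem {G : Set E} (hG : IsOpen G) {K : Set ℝ} (hK : IsCompact K)
    (h : ∀ s ∈ K, x - s • ω ∈ G) : ∀ᶠ p in 𝓝 (x, ω), ∀ s ∈ K, p.1 - s • p.2 ∈ G :=
  hK.eventually_forall_of_forall_eventually fun s hs =>
    (show Continuous fun q : (E × E) × ℝ => q.1.1 - q.2 • q.1.2 by fun_prop).continuousAt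
      |>.preimage_mem_nhds (hG.mem_nhds (h s hs))

theorem HasFDerivAt.apply_eq_one_of_eventually_add_smul {g : E → ℝ} {L : E →L[ℝ] ℝ}
    (hg : HasFDerivAt g L x) (h : ∀ᶠ s in 𝓝 (0 : ℝ), g (x + s • ω) = g x + s) : L ω = 1 := by
  have hline : HasDerivAt (fun s : ℝ => g (x + s • ω)) (L ω) 0 :=
    (by simpa using hg : HasFDerivAt g L (x + (0 : ℝ) • ω)).comp_hasDerivAt 0
      (by simpa using ((hasDerivAt_id (0 : ℝ)).smul_const ω).const_add x)
  exact hline.unique (((hasDerivAt_id (0 : ℝ)).const_add (g x)).congr_of_eventuallyEq h)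

theorem ContDiffAt.exists_isOpen_contDiffOn_inter {F : Type*} [NormedAddCommGroup F]
    [NormedSpace ℝ F] {n : ℕ} {τ g : E → F} {a : E} {s : Set E} (hτ : ContDiffAt ℝ n τ a)
    (heq : ∀ᶠ p in 𝓝 a, p ∈ s → g p = τ p) :
    ∃ V, IsOpen V ∧ a ∈ V ∧ ContDiffOn ℝ n g (V ∩ s) := by
  obtain ⟨u, hu, hτu⟩ := hτ.contDiffOn le_rfl (by simp)
  obtain ⟨V, hVsub, hV, haV⟩ := _root_.mem_nhds_iff.1 (inter_mem hu heq)
  exact ⟨V, hV, haV, (hτu.mono fun p hp => (hVsub hp.1).1).congr fun p hp => (hVsub hp.1).2 hp.2⟩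

end Rays

theorem eq_zero_of_mem_frontier {X : Type*} [TopologicalSpace X] {G U : Set X} {f : X → ℝ}
    (hU : IsOpen U) (hf : ContinuousOn f U) (hloc : ∀ z ∈ U, (z ∈ G ↔ f z < 0)) {z : X}
    (hzU : z ∈ U) (hz : z ∈ frontier G) : f z = 0 := by
  have hfz : ContinuousAt f z := hf.continuousAt (hU.mem_nhds hzU)
  refine le_antisymm (not_lt.1 fun hpos => ?_) (not_lt.1 fun hneg => hz.2 ?_)
  · have hout : ∀ᶠ w in 𝓝 z, w ∉ G := by
      filter_upwards [hU.eventually_mem hzU, continuousAt_const.eventually_lt hfz hpos]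
        with w hwU hw hwG using lt_asymm hw ((hloc w hwU).1 hwG)
    obtain ⟨w, hwG, hw⟩ := ((mem_closure_iff_frequently.1 hz.1).and_eventually hout).exists
    exact hw hwG
  · refine mem_interior_iff_mem_nhds.2 ?_
    filter_upwards [hU.eventually_mem hzU, hfz.eventually_lt continuousAt_const hneg] with w hwU hw
      using (hloc w hwU).2 hw

section EscapeTime

variable {G : Set E3} {x ω : E3}

def exitTimes (G : Set E3) (x ω : E3) : Set ℝ := {s | 0 < s ∧ x - s • ω ∉ G}

theorem escTime_eq_sInf_exitTimes : escTime G x ω = sInf (exitTimes G x ω) := rfl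

theorem bddBelow_exitTimes : BddBelow (exitTimes G x ω) := ⟨0, fun _ hs => hs.1.le⟩

theorem escTime_nonneg (G : Set E3) (x ω : E3) : 0 ≤ escTime G x ω :=
  Real.sInf_nonneg fun _ hs => hs.1.le

theorem sub_smul_mem_of_lt_escTime (hx : x ∈ G) {s : ℝ} (hs₀ : 0 ≤ s) (hs : s < escTime G x ω) :
    x - s • ω ∈ G := by
  rcases hs₀.eq_or_lt with rfl | hs₀
  · simpa using hx
  · by_contra h
    exact (csInf_le bddBelow_exitTimes ⟨hs₀, h⟩).not_gt hs

theorem exitTimes_nonempty (hGb : Bornology.IsBounded G) (hω : ω ≠ 0) :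
    (exitTimes G x ω).Nonempty := by
  obtain ⟨C, hC⟩ := isBounded_iff_forall_norm_le.1 hGb
  have hω' : 0 < ‖ω‖ := norm_pos_iff.2 hω
  set s := (‖x‖ + |C| + 1) / ‖ω‖
  refine ⟨s, by positivity, fun hmem => ?_⟩
  have hfar : ‖s • ω‖ = ‖x‖ + |C| + 1 := by
    rw [norm_smul, Real.norm_of_nonneg (by positivity), div_mul_cancel₀ _ hω'.ne']
  have htri := norm_sub_norm_le (s • ω) x
  rw [norm_sub_rev] at htri
  linarith [hC _ hmem, le_abs_self C]

theorem sub_escTime_smul_not_mem (hG : IsOpen G) (hne : (exitTimes G x ω).Nonempty) :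
    x - escTime G x ω • ω ∉ G :=
  closure_minimal (fun _ (hs : _ ∈ exitTimes G x ω) => hs.2)
    (hG.preimage (by fun_prop)).isClosed_compl (csInf_mem_closure hne bddBelow_exitTimes)

theorem escTime_pos (hG : IsOpen G) (hx : x ∈ G) (hne : (exitTimes G x ω).Nonempty) :
    0 < escTime G x ω :=
  (escTime_nonneg G x ω).lt_of_ne fun h =>
    sub_escTime_smul_not_mem hG hne (by rwa [← h, zero_smul, sub_zero])

theorem sub_escTime_smul_mem_frontier (hG : IsOpen G) (hx : x ∈ G)
    (hne : (exitTimes G x ω).Nonempty) : x - escTime G x ω • ω ∈ frontier G := by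
  rw [hG.frontier_eq]
  refine ⟨map_mem_closure (f := fun s : ℝ => x - s • ω) (by fun_prop) ?_
    (fun s (hs : s ∈ Ico 0 (escTime G x ω)) => sub_smul_mem_of_lt_escTime hx hs.1 hs.2),
    sub_escTime_smul_not_mem hG hne⟩
  rw [closure_Ico (escTime_pos hG hx hne).ne]
  exact right_mem_Icc.2 (escTime_nonneg G x ω)

theorem escTime_eq_of_forall {t b : ℝ} (ht : 0 ≤ t) (htb : t < b)
    (hin : ∀ s ∈ Ioo 0 t, x - s • ω ∈ G) (hout : ∀ s ∈ Ioo t b, x - s • ω ∉ G) :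
    escTime G x ω = t := by
  have hsub : Ioo t b ⊆ exitTimes G x ω := fun s hs => ⟨ht.trans_lt hs.1, hout s hs⟩
  refine le_antisymm ?_ (le_csInf ((nonempty_Ioo.2 htb).mono hsub) fun s hs =>
    not_lt.1 fun hst => hs.2 (hin s ⟨hs.1, hst⟩))
  calc escTime G x ω ≤ sInf (Ioo t b) := csInf_le_csInf bddBelow_exitTimes (nonempty_Ioo.2 htb) hsub
    _ = t := csInf_Ioo htb

theorem escTime_add_smul (hne : (exitTimes G x ω).Nonempty) {s : ℝ}
    (hs : ∀ v, |v| ≤ |s| → x - v • ω ∈ G) :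
    escTime G (x + s • ω) ω = escTime G x ω + s := by
  have hfar : ∀ v, x - v • ω ∉ G → |s| < |v| := fun v hv => not_le.1 fun h => hv (hs v h)
  have hset : exitTimes G (x + s • ω) ω = OrderIso.addRight s '' exitTimes G x ω := by
    rw [OrderIso.image_eq_preimage_symm]
    ext u
    simp only [exitTimes, mem_ofPred_eq, mem_preimage, OrderIso.addRight_symm,
      OrderIso.addRight_apply]
    rw [show x + s • ω - u • ω = x - (u + -s) • ω by module]
    refine and_congr_left fun hu => ?_
    have := hfar _ hu
    constructor <;> intro h <;> cases abs_cases s <;> cases abs_cases (u + -s) <;> linarith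
  rw [escTime_eq_sInf_exitTimes, hset, ← (OrderIso.addRight s).map_csInf' hne bddBelow_exitTimes]
  rfl

theorem eventually_escTime_add_smul (hG : IsOpen G) (hx : x ∈ G)
    (hne : (exitTimes G x ω).Nonempty) :
    ∀ᶠ s in 𝓝 (0 : ℝ), escTime G (x + s • ω) ω = escTime G x ω + s := by
  obtain ⟨r, hr, hball⟩ := nhds_basis_closedBall.mem_iff.1
    ((hG.preimage (by fun_prop : Continuous fun v : ℝ => x - v • ω)).mem_nhds
      (by simpa using hx : x - (0 : ℝ) • ω ∈ G))
  filter_upwards [closedBall_mem_nhds (0 : ℝ) hr] with s hs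
  refine escTime_add_smul hne fun v hv => hball ?_
  rw [mem_closedBall, dist_zero_right, Real.norm_eq_abs] at hs ⊢
  linarith

end EscapeTime

theorem eventually_escTime_eq {G U : Set E3} {f : E3 → ℝ} (hG : IsOpen G) (hU : IsOpen U)
    (hf : ContDiffOn ℝ 1 f U) (hloc : ∀ z ∈ U, (z ∈ G ↔ f z < 0)) {x ω : E3} {t : ℝ}
    (ht : 0 ≤ t) (hseg : ∀ s ∈ Ico 0 t, x - s • ω ∈ G) (hyU : x - t • ω ∈ U)
    (htr : fderiv ℝ f (x - t • ω) ω < 0) {τ : E3 × E3 → ℝ} (hτ : ContinuousAt τ (x, ω))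
    (hτt : τ (x, ω) = t) (hzero : ∀ᶠ p in 𝓝 (x, ω), f (p.1 - τ p • p.2) = 0) :
    ∀ᶠ p in 𝓝 (x, ω), p.1 ∈ G → escTime G p.1 p.2 = τ p := by
  obtain ⟨δ, hδ, htrans⟩ := exists_forall_Icc_fderiv_sub_smul_neg hU hyU
    ((hf.continuousOn_fderiv_of_isOpen hU le_rfl).continuousAt (hU.mem_nhds hyU)) htr
  have hinit : ∀ᶠ p in 𝓝 (x, ω), ∀ s ∈ Icc 0 (t - δ), p.1 - s • p.2 ∈ G :=
    eventually_forall_sub_smul_mem hG isCompact_Icc fun s hs => hseg s ⟨hs.1, by linarith [hs.2]⟩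
  have hτI : ∀ᶠ p in 𝓝 (x, ω), τ p ∈ Ioo (t - δ) (t + δ) :=
    hτ.eventually_mem (Ioo_mem_nhds (by linarith) (by linarith))
  filter_upwards [htrans, hinit, hτI, hzero] with ⟨y, v⟩ hUI hin hτp hτ0 hyG
  have hF : StrictMonoOn (fun s => f (y - s • v)) (Icc (t - δ) (t + δ)) :=
    strictMonoOn_comp_sub_smul (convex_Icc _ _)
      (fun s hs => (hf.contDiffAt (hU.mem_nhds (hUI s hs).1)).differentiableAt one_ne_zero)
      (fun s hs => (hUI s hs).2)
  have hτmem := Ioo_subset_Icc_self hτp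
  have hbefore : ∀ s ∈ Icc (t - δ) (t + δ), s < τ (y, v) → y - s • v ∈ G := fun s hs hlt =>
    (hloc _ (hUI s hs).1).2 (hτ0 ▸ hF hs hτmem hlt)
  have hafter : ∀ s ∈ Icc (t - δ) (t + δ), τ (y, v) < s → y - s • v ∉ G := fun s hs hlt hG' =>
    lt_asymm (hτ0 ▸ hF hτmem hs hlt) ((hloc _ (hUI s hs).1).1 hG')
  have hτ_nonneg : 0 ≤ τ (y, v) := not_lt.1 fun hneg =>
    hafter 0 ⟨by linarith [hτp.1], by linarith⟩ hneg (by simpa using hyG)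
  refine escTime_eq_of_forall hτ_nonneg hτp.2 (fun s hs => ?_)
    (fun s hs => hafter s ⟨by linarith [hτp.1, hs.1], hs.2.le⟩ hs.1)
  by_cases hs' : s ≤ t - δ
  · exact hin s ⟨hs.1.le, hs'⟩
  · exact hbefore s ⟨(not_le.1 hs').le, by linarith [hs.2, hτp.2]⟩ hs.2

theorem escTime_contDiff_near_regular_point_general
    (G : Set E3) (hG : IsOpen G) (hGb : Bornology.IsBounded G)
    (x₀ ω₀ : E3) (hx₀ : x₀ ∈ G) (hω₀ : ω₀ ∈ sphS)
    (U : Set E3) (hU : IsOpen U) (hy₀U : x₀ - escTime G x₀ ω₀ • ω₀ ∈ U)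
    (f : E3 → ℝ) (hf : ContDiffOn ℝ 1 f U)
    (hloc : ∀ z ∈ U, (z ∈ G ↔ f z < 0))
    (htrans : ⟪ω₀, gradient f (x₀ - escTime G x₀ ω₀ • ω₀)⟫ < 0) :
    (∃ V : Set (E3 × E3), IsOpen V ∧ (x₀, ω₀) ∈ V ∧
      ContDiffOn ℝ 1 (fun p : E3 × E3 => escTime G p.1 p.2) (V ∩ G ×ˢ sphS)) ∧
    Tendsto (fun p : E3 × E3 => escTime G p.1 p.2)
      (𝓝[G ×ˢ sphS] (x₀ - escTime G x₀ ω₀ • ω₀, ω₀)) (𝓝 (0 : ℝ)) ∧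
    (∃ L : E3 →L[ℝ] ℝ, HasFDerivAt (fun x : E3 => escTime G x ω₀) L x₀ ∧ L ω₀ = 1) := by
  have hne : (exitTimes G x₀ ω₀).Nonempty :=
    exitTimes_nonempty hGb (ne_zero_of_mem_sphere one_ne_zero ⟨ω₀, hω₀⟩)
  set y₀ := x₀ - escTime G x₀ ω₀ • ω₀
  have hfy₀ : f y₀ = 0 := eq_zero_of_mem_frontier hU hf.continuousOn hloc hy₀U
    (sub_escTime_smul_mem_frontier hG hx₀ hne)
  have htr : fderiv ℝ f y₀ ω₀ < 0 := by simpa [inner_gradient_right] using htrans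
  have hfy : ContDiffAt ℝ 1 f y₀ := hf.contDiffAt (hU.mem_nhds hy₀U)
  obtain ⟨τ, hτ, hτ₀, hτeq⟩ := exists_contDiffAt_sub_smul_eq one_ne_zero hfy htr.ne
  have hesc := eventually_escTime_eq hG hU hf hloc (escTime_nonneg G x₀ ω₀)
    (fun s hs => sub_smul_mem_of_lt_escTime hx₀ hs.1 hs.2) hy₀U htr hτ.continuousAt hτ₀
    (hτeq.mono fun _ hp => hp.trans hfy₀)
  obtain ⟨σ, hσ, hσ₀, hσeq⟩ := exists_contDiffAt_sub_smul_eq (x := y₀) (t := 0) one_ne_zero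
    (by simpa using hfy) (by simpa using htr.ne)
  have hesc' := eventually_escTime_eq hG hU hf hloc le_rfl (by simp) (by simpa using hy₀U)
    (by simpa using htr) hσ.continuousAt hσ₀ (by simpa [hfy₀] using hσeq)
  refine ⟨hτ.exists_isOpen_contDiffOn_inter (hesc.mono fun p hp hpS => hp hpS.1), ?_, ?_⟩
  · have hσlim := hσ.continuousAt.tendsto
    rw [hσ₀] at hσlim
    refine (tendsto_nhdsWithin_of_tendsto_nhds hσlim).congr' ?_
    filter_upwards [nhdsWithin_le_nhds hesc', self_mem_nhdsWithin] with p hp hpS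
      using (hp hpS.1).symm
  · have hline : (fun x => escTime G x ω₀) =ᶠ[𝓝 x₀] fun x => τ (x, ω₀) := by
      filter_upwards [(continuous_id.prodMk continuous_const).tendsto x₀ |>.eventually hesc,
        hG.eventually_mem hx₀] with x hx hxG using hx hxG
    have hL := ((hτ.differentiableAt one_ne_zero).hasFDerivAt.comp x₀
      (hasFDerivAt_prodMk_left x₀ ω₀)).congr_of_eventuallyEq hline
    exact ⟨_, hL, hL.apply_eq_one_of_eventually_add_smul (eventually_escTime_add_smul hG hx₀ hne)⟩

/-- Let `(x₀,ω₀) ∈ G × S` be such that `y₀ := x₀ − t(x₀,ω₀)ω₀` is a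
regular (C¹) point of `∂G` (expressed by a local C¹ defining function `f` on a
neighbourhood `U` of `y₀`, whose gradient at `y₀` is nonzero and points in the direction
of the outward unit normal `ν(y₀)`) and `ω₀·ν(y₀) < 0` (i.e. `⟪ω₀, ∇f(y₀)⟫ < 0`).
Then the escape time `t` is continuously differentiable on a neighbourhood of `(x₀,ω₀)`
in `G × S`, one has `t(x,ω) → 0` as `(x,ω) → (y₀,ω₀)` within `G × S`, and
`ω₀·(∇ₓt)(x₀,ω₀) = 1`. -/
theorem escTime_contDiff_near_regular_point
    (G : Set E3) (hG : IsOpen G) (hGb : Bornology.IsBounded G)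
    (x₀ ω₀ : E3) (hx₀ : x₀ ∈ G) (hω₀ : ω₀ ∈ sphS)
    (U : Set E3) (hU : IsOpen U) (hy₀U : x₀ - escTime G x₀ ω₀ • ω₀ ∈ U)
    (f : E3 → ℝ) (hf : ContDiffOn ℝ 1 f U)
    (hloc : ∀ z ∈ U, (z ∈ G ↔ f z < 0))
    (hgrad : gradient f (x₀ - escTime G x₀ ω₀ • ω₀) ≠ 0)
    (htrans : ⟪ω₀, gradient f (x₀ - escTime G x₀ ω₀ • ω₀)⟫ < 0) :
    (∃ V : Set (E3 × E3), IsOpen V ∧ (x₀, ω₀) ∈ V ∧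
      ContDiffOn ℝ 1 (fun p : E3 × E3 => escTime G p.1 p.2) (V ∩ G ×ˢ sphS)) ∧
    Tendsto (fun p : E3 × E3 => escTime G p.1 p.2)
      (𝓝[G ×ˢ sphS] (x₀ - escTime G x₀ ω₀ • ω₀, ω₀)) (𝓝 (0 : ℝ)) ∧
    (∃ L : E3 →L[ℝ] ℝ, HasFDerivAt (fun x : E3 => escTime G x ω₀) L x₀ ∧ L ω₀ = 1) :=
  escTime_contDiff_near_regular_point_general G hG hGb x₀ ω₀ hx₀ hω₀ U hU hy₀U f hf hloc htrans
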